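/- arXiv:1801.05555 — 2 statements merged into one kernel-verified Lean document; each statement's English description precedes it below -/
import Mathlib

section
/- Suppose two sequences of positive real numbers (M_k)_{k≥1} and (N_k)_{k≥1} satisfy M₁ = π/(3√3), N₁ = π²/16, and for all k ≥ 2: M_{k−1} M_k = (k · Γ(k/2)² · N_{k−1}²)/(2(2k+1)) · Π_{j=1}^{k} ((2j)²/((2j)²−1))^{k−1/2}, and N_{k−1} N_k = ((2k+1)/(k+1)) · (M_k²/(k−1)!) · Π_{j=2}^{k+1} ((2j−1)²/((2j−1)²−1))^{k}. Then for all k ≥ 1: M_k = Π_{j=1}^{k} (2j)^{k−j} π^j / √((2j+1)^{2j+1}) and N_k = (2 π^{(k+1)²/2} / Γ((k+1)/2)) · Π_{j=1}^{k+1} (2j−1)^{k+1−j} / (2j)^j. -/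
open Real Finset

noncomputable def Pf (k : ℕ) : ℝ :=
  ∏ j ∈ Finset.Icc 1 k,
    (2 * (j : ℝ)) ^ (k - j) * π ^ j / Real.sqrt ((2 * (j : ℝ) + 1) ^ (2 * j + 1))

noncomputable def Rf (k : ℕ) : ℝ :=
  ∏ j ∈ Finset.Icc 1 (k + 1), (2 * (j : ℝ) - 1) ^ (k + 1 - j) / (2 * (j : ℝ)) ^ j

noncomputable def Qf (k : ℕ) : ℝ :=
  2 * π ^ ((((k : ℝ) + 1) ^ 2) / 2) / Real.Gamma (((k : ℝ) + 1) / 2) * Rf k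

noncomputable def Wf (k : ℕ) : ℝ :=
  ∏ j ∈ Finset.Icc 1 k,
    ((2 * (j : ℝ)) ^ 2 / ((2 * (j : ℝ)) ^ 2 - 1)) ^ ((k : ℝ) - 1 / 2)

noncomputable def Vf (k : ℕ) : ℝ :=
  ∏ j ∈ Finset.Icc 2 (k + 1),
    ((2 * (j : ℝ) - 1) ^ 2 / ((2 * (j : ℝ) - 1) ^ 2 - 1)) ^ k

noncomputable def pa (k : ℕ) : ℝ := ∏ j ∈ Finset.Icc 1 k, (2 * (j : ℝ))
noncomputable def pb (k : ℕ) : ℝ := ∏ j ∈ Finset.Icc 1 k, (2 * (j : ℝ) - 1)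

lemma pa_pos (k : ℕ) : 0 < pa k := by
  refine Finset.prod_pos fun j hj => ?_
  have := (Finset.mem_Icc.mp hj).1
  positivity

lemma pb_pos (k : ℕ) : 0 < pb k := by
  refine Finset.prod_pos fun j hj => ?_
  have h1 := (Finset.mem_Icc.mp hj).1
  have : (1 : ℝ) ≤ (j : ℝ) := by exact_mod_cast h1
  nlinarith

lemma pa_succ (k : ℕ) : pa (k + 1) = pa k * (2 * ((k : ℝ) + 1)) := by
  unfold pa
  rw [Finset.prod_Icc_succ_top (by omega)]
  push_cast; ring

lemma pb_succ (k : ℕ) : pb (k + 1) = pb k * (2 * ((k : ℝ) + 1) - 1) := by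
  unfold pb
  rw [Finset.prod_Icc_succ_top (by omega)]
  push_cast; ring

lemma Pf_pos (k : ℕ) : 0 < Pf k := by
  refine Finset.prod_pos fun j hj => ?_
  have h1 := (Finset.mem_Icc.mp hj).1
  have hj1 : (1 : ℝ) ≤ (j : ℝ) := by exact_mod_cast h1
  have : (0:ℝ) < 2 * (j:ℝ) := by linarith
  have hs : (0:ℝ) < Real.sqrt ((2 * (j : ℝ) + 1) ^ (2 * j + 1)) := by
    apply Real.sqrt_pos.mpr; positivity
  positivity

lemma Rf_pos (k : ℕ) : 0 < Rf k := by
  refine Finset.prod_pos fun j hj => ?_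
  have h1 := (Finset.mem_Icc.mp hj).1
  have hj1 : (1 : ℝ) ≤ (j : ℝ) := by exact_mod_cast h1
  have h2 : (0:ℝ) < 2 * (j:ℝ) - 1 := by linarith
  have : (0:ℝ) < 2 * (j:ℝ) := by linarith
  positivity

lemma Qf_pos (k : ℕ) : 0 < Qf k := by
  have hG : 0 < Real.Gamma (((k : ℝ) + 1) / 2) := by
    apply Real.Gamma_pos_of_pos; positivity
  have := Rf_pos k
  have hπ : (0:ℝ) < π ^ ((((k : ℝ) + 1) ^ 2) / 2) := Real.rpow_pos_of_pos Real.pi_pos _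
  unfold Qf; positivity

lemma Wf_pos (k : ℕ) : 0 < Wf k := by
  refine Finset.prod_pos fun j hj => ?_
  have h1 := (Finset.mem_Icc.mp hj).1
  have hj1 : (1 : ℝ) ≤ (j : ℝ) := by exact_mod_cast h1
  have hden : (0:ℝ) < (2 * (j : ℝ)) ^ 2 - 1 := by nlinarith
  have hnum : (0:ℝ) < (2 * (j : ℝ)) ^ 2 := by nlinarith
  exact Real.rpow_pos_of_pos (by positivity) _

lemma Vf_pos (k : ℕ) : 0 < Vf k := by
  refine Finset.prod_pos fun j hj => ?_
  have h1 := (Finset.mem_Icc.mp hj).1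
  have hj1 : (2 : ℝ) ≤ (j : ℝ) := by exact_mod_cast h1
  have hden : (0:ℝ) < (2 * (j : ℝ) - 1) ^ 2 - 1 := by nlinarith
  have hnum : (0:ℝ) < (2 * (j : ℝ) - 1) ^ 2 := by nlinarith
  positivity

lemma Pf_succ (k : ℕ) : Pf (k + 1) =
    Pf k * pa k * (π ^ (k + 1) /
      Real.sqrt ((2 * ((k : ℝ) + 1) + 1) ^ (2 * (k + 1) + 1))) := by
  have hcong : ∀ j ∈ Finset.Icc 1 k,
      (2 * (j : ℝ)) ^ (k + 1 - j) * π ^ j / Real.sqrt ((2 * (j : ℝ) + 1) ^ (2 * j + 1)) =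
      ((2 * (j : ℝ)) ^ (k - j) * π ^ j / Real.sqrt ((2 * (j : ℝ) + 1) ^ (2 * j + 1))) *
        (2 * (j : ℝ)) := by
    intro j hj
    have hjk : j ≤ k := (Finset.mem_Icc.mp hj).2
    have h : k + 1 - j = (k - j) + 1 := by omega
    rw [h, pow_succ]; ring
  unfold Pf pa
  rw [Finset.prod_Icc_succ_top (by omega : 1 ≤ k + 1),
    Finset.prod_congr rfl hcong, Finset.prod_mul_distrib]
  have h0 : k + 1 - (k + 1) = 0 := by omega
  rw [h0, pow_zero]
  push_cast
  ring

lemma Rf_succ (k : ℕ) : Rf (k + 1) =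
    Rf k * pb (k + 1) / (2 * ((k : ℝ) + 1) + 2) ^ (k + 2) := by
  have hcong : ∀ j ∈ Finset.Icc 1 (k + 1),
      (2 * (j : ℝ) - 1) ^ (k + 1 + 1 - j) / (2 * (j : ℝ)) ^ j =
      ((2 * (j : ℝ) - 1) ^ (k + 1 - j) / (2 * (j : ℝ)) ^ j) * (2 * (j : ℝ) - 1) := by
    intro j hj
    have hjk : j ≤ k + 1 := (Finset.mem_Icc.mp hj).2
    have h : k + 1 + 1 - j = (k + 1 - j) + 1 := by omega
    rw [h, pow_succ]; ring
  unfold Rf pb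
  rw [Finset.prod_Icc_succ_top (by omega : 1 ≤ k + 1 + 1),
    Finset.prod_congr rfl hcong, Finset.prod_mul_distrib]
  have h0 : k + 1 + 1 - (k + 1 + 1) = 0 := by omega
  rw [h0, pow_zero]
  push_cast
  ring

lemma prod_odd (k : ℕ) :
    ∏ j ∈ Finset.Icc 1 k, (2 * (j : ℝ) + 1) = pb k * (2 * (k : ℝ) + 1) := by
  induction k with
  | zero => simp [pb]
  | succ n ih =>
    rw [Finset.prod_Icc_succ_top (by omega), ih, pb_succ]
    push_cast; ring

lemma prod_a (k : ℕ) :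
    ∏ j ∈ Finset.Icc 1 k, ((2 * (j : ℝ)) ^ 2 / ((2 * (j : ℝ)) ^ 2 - 1)) =
      (pa k) ^ 2 / (pb k * (pb k * (2 * (k : ℝ) + 1))) := by
  have hcong : ∀ j ∈ Finset.Icc 1 k,
      ((2 * (j : ℝ)) ^ 2 / ((2 * (j : ℝ)) ^ 2 - 1)) =
      (2 * (j : ℝ)) ^ 2 / ((2 * (j : ℝ) - 1) * (2 * (j : ℝ) + 1)) := by
    intro j hj
    congr 1
    ring
  have hsplit : ∏ j ∈ Finset.Icc 1 k, ((2 * (j : ℝ) - 1) * (2 * (j : ℝ) + 1)) =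
      pb k * (pb k * (2 * (k : ℝ) + 1)) := by
    rw [Finset.prod_mul_distrib, prod_odd]
    rfl
  rw [Finset.prod_congr rfl hcong, Finset.prod_div_distrib, Finset.prod_pow, hsplit]
  rfl

lemma prod_b (k : ℕ) :
    ∏ j ∈ Finset.Icc 2 (k + 1), ((2 * (j : ℝ) - 1) ^ 2 / ((2 * (j : ℝ) - 1) ^ 2 - 1)) =
      (pb k * (2 * (k : ℝ) + 1)) ^ 2 / (pa k * (pa k * ((k : ℝ) + 1))) := by
  induction k with
  | zero => simp [pa, pb]
  | succ n ih =>
    rw [Finset.prod_Icc_succ_top (by omega : 2 ≤ n + 1 + 1), ih]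
    have h1 : pa n ≠ 0 := ne_of_gt (pa_pos n)
    have h1' : pb n ≠ 0 := ne_of_gt (pb_pos n)
    have h2 : ((n : ℝ) + 1) ≠ 0 := by positivity
    have h2' : ((n : ℝ) + 2) ≠ 0 := by positivity
    have h3 : (2 * (n : ℝ) + 1) ≠ 0 := by positivity
    have h3' : (2 * (n : ℝ) + 3) ≠ 0 := by positivity
    have hc : ((n + 1 : ℕ) : ℝ) = (n : ℝ) + 1 := by push_cast; ring
    rw [hc, pa_succ, pb_succ]
    have h4 : (2 * ((n : ℝ) + 1 + 1) - 1) ^ 2 - 1 = (2 * ((n:ℝ) + 1)) * (2 * ((n : ℝ) + 1) + 2) := by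
      ring
    have h5 : (2 * ((n:ℝ) + 1 + 1) - 1) = 2 * ((n:ℝ) + 1) + 1 := by ring
    push_cast
    rw [h4, h5]
    rw [div_mul_div_comm, div_eq_div_iff (by positivity) (by positivity)]
    ring

lemma Wf_succ (k : ℕ) : Wf (k + 1) =
    Wf k * ((pa k) ^ 2 / (pb k * (pb k * (2 * (k : ℝ) + 1)))) *
      ((2 * ((k : ℝ) + 1)) ^ 2 / ((2 * ((k : ℝ) + 1)) ^ 2 - 1)) ^ (((k : ℝ) + 1) - 1 / 2) := by
  have hcong : ∀ j ∈ Finset.Icc 1 k,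
      ((2 * (j : ℝ)) ^ 2 / ((2 * (j : ℝ)) ^ 2 - 1)) ^ (((k + 1 : ℕ) : ℝ) - 1 / 2) =
      ((2 * (j : ℝ)) ^ 2 / ((2 * (j : ℝ)) ^ 2 - 1)) ^ ((k : ℝ) - 1 / 2) *
        ((2 * (j : ℝ)) ^ 2 / ((2 * (j : ℝ)) ^ 2 - 1)) := by
    intro j hj
    have h1 := (Finset.mem_Icc.mp hj).1
    have hj1 : (1 : ℝ) ≤ (j : ℝ) := by exact_mod_cast h1
    have hden : (0:ℝ) < (2 * (j : ℝ)) ^ 2 - 1 := by nlinarith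
    have hpos : (0:ℝ) < (2 * (j : ℝ)) ^ 2 / ((2 * (j : ℝ)) ^ 2 - 1) := by positivity
    have he2 : (((k + 1 : ℕ)):ℝ) - 1 / 2 = ((k:ℝ) - 1 / 2) + 1 := by push_cast; ring
    rw [he2, Real.rpow_add hpos, Real.rpow_one]
  unfold Wf
  rw [Finset.prod_Icc_succ_top (by omega : 1 ≤ k + 1),
    Finset.prod_congr rfl hcong, Finset.prod_mul_distrib, prod_a]
  push_cast
  ring

lemma Vf_succ (k : ℕ) : Vf (k + 1) =
    Vf k * ((pb k * (2 * (k : ℝ) + 1)) ^ 2 / (pa k * (pa k * ((k : ℝ) + 1)))) *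
      ((2 * ((k : ℝ) + 2) - 1) ^ 2 / ((2 * ((k : ℝ) + 2) - 1) ^ 2 - 1)) ^ (k + 1) := by
  have hcong : ∀ j ∈ Finset.Icc 2 (k + 1),
      ((2 * (j : ℝ) - 1) ^ 2 / ((2 * (j : ℝ) - 1) ^ 2 - 1)) ^ (k + 1) =
      ((2 * (j : ℝ) - 1) ^ 2 / ((2 * (j : ℝ) - 1) ^ 2 - 1)) ^ k *
        ((2 * (j : ℝ) - 1) ^ 2 / ((2 * (j : ℝ) - 1) ^ 2 - 1)) := by
    intro j hj
    rw [pow_succ]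
  unfold Vf
  rw [Finset.prod_Icc_succ_top (by omega : 2 ≤ k + 1 + 1),
    Finset.prod_congr rfl hcong, Finset.prod_mul_distrib, prod_b]
  push_cast
  ring

lemma sqrt_odd_pow (x : ℝ) (hx : 0 ≤ x) (n : ℕ) :
    Real.sqrt (x ^ (2 * n + 1)) = x ^ ((n : ℝ) + 1 / 2) := by
  have h1 : x ^ (2 * n + 1) = x ^ ((2 * n + 1 : ℕ) : ℝ) := (Real.rpow_natCast x _).symm
  rw [h1, Real.sqrt_eq_rpow, ← Real.rpow_mul hx]
  congr 1
  push_cast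
  ring

lemma lemA (m : ℕ) : Pf m * Pf (m + 1) =
    2 * ((m : ℝ) + 1) * π ^ ((m + 1) ^ 2) * (Rf m) ^ 2 * Wf (m + 1) / (2 * (m : ℝ) + 3) := by
  induction m with
  | zero =>
    unfold Pf Rf Wf
    norm_num
    have h27 : √(27:ℝ) = 3 * √3 := by
      rw [show (27:ℝ) = 3^2 * 3 by norm_num, Real.sqrt_mul (by positivity), Real.sqrt_sq (by norm_num)]
    have h43 : ((4:ℝ)/3) ^ ((1:ℝ)/2) = 2 / √3 := by
      rw [← Real.sqrt_eq_rpow, show (4:ℝ)/3 = 2^2/3 by norm_num, Real.sqrt_div (by positivity),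
        Real.sqrt_sq (by norm_num)]
    rw [h27, h43]
    have h3 : (0:ℝ) < √3 := by positivity
    field_simp
    ring
  | succ n ih =>
    have ih' := ih
    rw [Pf_succ n] at ih'
    rw [Pf_succ (n+1), Pf_succ n, Rf_succ n, Wf_succ (n+1), pa_succ n, pb_succ n]
    push_cast at ih' ⊢
    rw [sqrt_odd_pow _ (by positivity) (n+1)] at ih' ⊢
    rw [sqrt_odd_pow _ (by positivity) (n+1+1)]
    push_cast at ih' ⊢
    have hfac : (2 * ((n:ℝ) + 1 + 1)) ^ 2 - 1 = (2 * ((n:ℝ) + 1) + 1) * (2 * ((n:ℝ) + 1 + 1) + 1) := by ring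
    rw [hfac, Real.div_rpow (by positivity) (by positivity),
      Real.mul_rpow (by positivity) (by positivity)]
    rw [show ((n:ℝ) + 1 + 1 - 1/2 : ℝ) = (n:ℝ) + 1 + 1/2 from by ring]
    rw [show ((n:ℝ) + 1 + 1 + 1/2 : ℝ) = ((n:ℝ) + 1 + 1/2) + 1 from by ring]
    rw [Real.rpow_add_one (by positivity : (0:ℝ) < 2*((n:ℝ)+1+1)+1).ne']
    rw [← Real.rpow_natCast (2*((n:ℝ)+1+1)) 2, ← Real.rpow_mul (by positivity)]
    rw [show (((2:ℕ):ℝ)) * ((n:ℝ) + 1 + 1/2) = ((2*n+3 : ℕ):ℝ) from by push_cast; ring,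
      Real.rpow_natCast]
    have h1 : (0:ℝ) < pa n := pa_pos n
    have h2 : (0:ℝ) < pb n := pb_pos n
    have h3 : (0:ℝ) < (2 * ((n:ℝ) + 1) + 1) ^ ((n:ℝ) + 1 + 1/2) := Real.rpow_pos_of_pos (by positivity) _
    have h4 : (0:ℝ) < (2 * ((n:ℝ) + 1 + 1) + 1) ^ ((n:ℝ) + 1 + 1/2) := Real.rpow_pos_of_pos (by positivity) _
    calc Pf n * pa n * (π ^ (n + 1) / (2 * ((n:ℝ) + 1) + 1) ^ ((n:ℝ) + 1 + 1 / 2)) *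
      (Pf n * pa n * (π ^ (n + 1) / (2 * ((n:ℝ) + 1) + 1) ^ ((n:ℝ) + 1 + 1 / 2)) * (pa n * (2 * ((n:ℝ) + 1))) *
        (π ^ (n + 1 + 1) / ((2 * ((n:ℝ) + 1 + 1) + 1) ^ ((n:ℝ) + 1 + 1 / 2) * (2 * ((n:ℝ) + 1 + 1) + 1))))
        = (Pf n * (Pf n * pa n * (π ^ (n + 1) / (2 * ((n:ℝ) + 1) + 1) ^ ((n:ℝ) + 1 + 1 / 2)))) *
          (pa n * pa n * (2 * ((n:ℝ) + 1)) * (π ^ (n + 1) / (2 * ((n:ℝ) + 1) + 1) ^ ((n:ℝ) + 1 + 1 / 2)) *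
            (π ^ (n + 1 + 1) / ((2 * ((n:ℝ) + 1 + 1) + 1) ^ ((n:ℝ) + 1 + 1 / 2) * (2 * ((n:ℝ) + 1 + 1) + 1)))) := by
          ring
      _ = (2 * ((n:ℝ) + 1) * π ^ (n + 1) ^ 2 * Rf n ^ 2 * Wf (n + 1) / (2 * (n:ℝ) + 3)) *
          (pa n * pa n * (2 * ((n:ℝ) + 1)) * (π ^ (n + 1) / (2 * ((n:ℝ) + 1) + 1) ^ ((n:ℝ) + 1 + 1 / 2)) *
            (π ^ (n + 1 + 1) / ((2 * ((n:ℝ) + 1 + 1) + 1) ^ ((n:ℝ) + 1 + 1 / 2) * (2 * ((n:ℝ) + 1 + 1) + 1)))) := by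
          rw [ih']
      _ = 2 * ((n:ℝ) + 1 + 1) * π ^ (n + 1 + 1) ^ 2 *
            (Rf n * (pb n * (2 * ((n:ℝ) + 1) - 1)) / (2 * ((n:ℝ) + 1) + 2) ^ (n + 2)) ^ 2 *
            (Wf (n + 1) *
                ((pa n * (2 * ((n:ℝ) + 1))) ^ 2 /
                  (pb n * (2 * ((n:ℝ) + 1) - 1) * (pb n * (2 * ((n:ℝ) + 1) - 1) * (2 * ((n:ℝ) + 1) + 1)))) *
              ((2 * ((n:ℝ) + 1 + 1)) ^ (2 * n + 3) /
                ((2 * ((n:ℝ) + 1) + 1) ^ ((n:ℝ) + 1 + 1 / 2) * (2 * ((n:ℝ) + 1 + 1) + 1) ^ ((n:ℝ) + 1 + 1 / 2)))) /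
          (2 * ((n:ℝ) + 1) + 3) := by
          have e1 : (0:ℝ) < 2 * ((n:ℝ) + 1) - 1 := by nlinarith [Nat.cast_nonneg (α := ℝ) n]
          field_simp
          ring

lemma lemB (m : ℕ) : 2 ^ (m + 2) * π ^ ((m + 1) * (m + 2)) * Rf m * Rf (m + 1) =
    (2 * (m : ℝ) + 3) / ((m : ℝ) + 2) * (Pf (m + 1)) ^ 2 * Vf (m + 1) := by
  induction m with
  | zero =>
    unfold Pf Rf Vf
    norm_num [show Finset.Icc 1 2 = {1, 2} from rfl]
    rw [div_pow, Real.sq_sqrt (by norm_num : (27:ℝ) ≥ 0)]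
    ring
  | succ n ih =>
    push_cast
    calc 2 ^ (n + 1 + 2) * π ^ ((n + 1 + 1) * (n + 1 + 2)) * Rf (n + 1) * Rf (n + 1 + 1)
        = (2 ^ (n + 2) * π ^ ((n + 1) * (n + 2)) * Rf n * Rf (n + 1)) *
          (2 * π ^ (2 * n + 4) * (pb (n + 1)) ^ 2 * (2 * ((n:ℝ) + 1) + 1) /
            ((2 * ((n:ℝ) + 1) + 2) ^ (n + 2) * (2 * ((n:ℝ) + 1 + 1) + 2) ^ (n + 3))) := by
          rw [Rf_succ (n + 1), Rf_succ n, pb_succ (n + 1)]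
          push_cast
          have d1 : (0:ℝ) < (2 * ((n:ℝ) + 1) + 2) ^ (n + 2) := by positivity
          have d2 : (0:ℝ) < (2 * ((n:ℝ) + 1 + 1) + 2) ^ (n + 3) := by positivity
          field_simp
          ring
      _ = ((2 * (n:ℝ) + 3) / ((n:ℝ) + 2) * (Pf (n + 1)) ^ 2 * Vf (n + 1)) *
          (2 * π ^ (2 * n + 4) * (pb (n + 1)) ^ 2 * (2 * ((n:ℝ) + 1) + 1) /
            ((2 * ((n:ℝ) + 1) + 2) ^ (n + 2) * (2 * ((n:ℝ) + 1 + 1) + 2) ^ (n + 3))) := by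
          rw [ih]
      _ = (2 * ((n:ℝ) + 1) + 3) / (((n:ℝ) + 1) + 2) * (Pf (n + 1 + 1)) ^ 2 * Vf (n + 1 + 1) := by
          rw [Pf_succ (n + 1), Vf_succ (n + 1)]
          push_cast
          rw [mul_pow, mul_pow, div_pow, Real.sq_sqrt (by positivity)]
          rw [show (2*((n:ℝ)+1+2)-1)^2 - 1 = (2*((n:ℝ)+1)+2)*(2*((n:ℝ)+1+1)+2) from by ring,
            div_pow, mul_pow (2*((n:ℝ)+1)+2) (2*((n:ℝ)+1+1)+2) (n+1+1),
            ← pow_mul (2*((n:ℝ)+1+2)-1) 2 (n+1+1)]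
          have d1 : (0:ℝ) < pa (n + 1) := pa_pos (n + 1)
          have d2 : (0:ℝ) < pb (n + 1) := pb_pos (n + 1)
          have d3 : (0:ℝ) < (2 * ((n:ℝ) + 1 + 1) + 1) ^ (2 * (n + 1 + 1) + 1) := by positivity
          have d4 : (0:ℝ) < (2 * ((n:ℝ) + 1) + 2) ^ (n + 2) := by positivity
          have d5 : (0:ℝ) < (2 * ((n:ℝ) + 1 + 1) + 2) ^ (n + 3) := by positivity
          have d6 : (0:ℝ) < (2 * ((n:ℝ) + 1) + 2) ^ (n + 1 + 1) := by positivity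
          have d7 : (0:ℝ) < (2 * ((n:ℝ) + 1 + 1) + 2) ^ (n + 1 + 1) := by positivity
          field_simp
          ring

lemma QQ (k : ℕ) : Qf k * Qf (k + 1) =
    2 ^ (k + 2) * π ^ ((k + 1) * (k + 2)) * Rf k * Rf (k + 1) / (k.factorial : ℝ) := by
  have hGG : Real.Gamma (((k:ℝ) + 1) / 2) * Real.Gamma (((k:ℝ) + 1 + 1) / 2) =
      (k.factorial : ℝ) * ((2:ℝ) ^ k)⁻¹ * Real.sqrt π := by
    have h := Real.Gamma_mul_Gamma_add_half (((k:ℝ) + 1) / 2)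
    rw [show ((k:ℝ) + 1) / 2 + 1/2 = ((k:ℝ) + 1 + 1) / 2 by ring,
      show 2 * (((k:ℝ) + 1) / 2) = (k:ℝ) + 1 by ring,
      Real.Gamma_nat_eq_factorial,
      show (1 - ((k:ℝ) + 1) : ℝ) = -(k:ℝ) by ring,
      Real.rpow_neg (by norm_num), Real.rpow_natCast] at h
    exact h
  have hpp : π ^ ((((k:ℝ) + 1) ^ 2) / 2) * π ^ ((((k:ℝ) + 1 + 1) ^ 2) / 2) =
      π ^ ((k + 1) * (k + 2)) * Real.sqrt π := by
    rw [← Real.rpow_add Real.pi_pos, Real.sqrt_eq_rpow,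
      ← Real.rpow_natCast π ((k + 1) * (k + 2)), ← Real.rpow_add Real.pi_pos]
    congr 1
    push_cast
    ring
  have hG1 : Real.Gamma (((k:ℝ) + 1) / 2) ≠ 0 := (Real.Gamma_pos_of_pos (by positivity)).ne'
  have hG2 : Real.Gamma (((k:ℝ) + 1 + 1) / 2) ≠ 0 := (Real.Gamma_pos_of_pos (by positivity)).ne'
  have hsπ : Real.sqrt π ≠ 0 := (Real.sqrt_pos.mpr Real.pi_pos).ne'
  have hfa : ((k.factorial : ℝ)) ≠ 0 := by positivity
  unfold Qf
  push_cast
  rw [show (2 * π ^ (((k:ℝ) + 1) ^ 2 / 2) / Real.Gamma (((k:ℝ) + 1) / 2) * Rf k) *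
      (2 * π ^ (((k:ℝ) + 1 + 1) ^ 2 / 2) / Real.Gamma (((k:ℝ) + 1 + 1) / 2) * Rf (k + 1)) =
      4 * (π ^ (((k:ℝ) + 1) ^ 2 / 2) * π ^ (((k:ℝ) + 1 + 1) ^ 2 / 2)) * Rf k * Rf (k + 1) /
        (Real.Gamma (((k:ℝ) + 1) / 2) * Real.Gamma (((k:ℝ) + 1 + 1) / 2)) from by
    field_simp; ring]
  rw [hGG, hpp]
  field_simp
  ring

theorem broadhurst_mellit_determinants (M N : ℕ → ℝ)
    (hM1 : M 1 = π / (3 * Real.sqrt 3)) (hN1 : N 1 = π ^ 2 / 16)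
    (hMrec : ∀ k : ℕ, 2 ≤ k →
      M (k - 1) * M k =
        (k : ℝ) * (Real.Gamma ((k : ℝ) / 2)) ^ 2 * (N (k - 1)) ^ 2 /
            (2 * (2 * (k : ℝ) + 1)) *
          ∏ j ∈ Finset.Icc 1 k,
            ((2 * (j : ℝ)) ^ 2 / ((2 * (j : ℝ)) ^ 2 - 1)) ^ ((k : ℝ) - 1 / 2))
    (hNrec : ∀ k : ℕ, 2 ≤ k →
      N (k - 1) * N k =
        (2 * (k : ℝ) + 1) / ((k : ℝ) + 1) * (M k) ^ 2 / ((k - 1).factorial : ℝ) *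
          ∏ j ∈ Finset.Icc 2 (k + 1),
            ((2 * (j : ℝ) - 1) ^ 2 / ((2 * (j : ℝ) - 1) ^ 2 - 1)) ^ k) :
    ∀ k : ℕ, 1 ≤ k →
      (M k = ∏ j ∈ Finset.Icc 1 k,
          (2 * (j : ℝ)) ^ (k - j) * π ^ j / Real.sqrt ((2 * (j : ℝ) + 1) ^ (2 * j + 1))) ∧
      (N k = 2 * π ^ ((((k : ℝ) + 1) ^ 2) / 2) / Real.Gamma (((k : ℝ) + 1) / 2) *
          ∏ j ∈ Finset.Icc 1 (k + 1),
            (2 * (j : ℝ) - 1) ^ (k + 1 - j) / (2 * (j : ℝ)) ^ j) := by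
  have main : ∀ k : ℕ, 1 ≤ k → M k = Pf k ∧ N k = Qf k := by
    intro k hk
    induction k, hk using Nat.le_induction with
    | base =>
      constructor
      · rw [hM1]
        show _ = Pf 1
        unfold Pf
        norm_num
        rw [show (27:ℝ) = 3^2 * 3 by norm_num, Real.sqrt_mul (by positivity),
          Real.sqrt_sq (by norm_num)]
      · rw [hN1]
        show _ = Qf 1
        unfold Qf Rf
        rw [show Finset.Icc 1 2 = {1, 2} from rfl]
        norm_num [Real.Gamma_one]
        ring
    | succ k hk ih =>
      obtain ⟨hMk, hNk⟩ := ih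
      have hPk : Pf k ≠ 0 := (Pf_pos k).ne'
      have hQk : Qf k ≠ 0 := (Qf_pos k).ne'
      -- M (k+1) = Pf (k+1)
      have hrec := hMrec (k + 1) (by omega)
      simp only [Nat.add_sub_cancel] at hrec
      rw [hMk, hNk] at hrec
      have hRHS : ((k + 1 : ℕ) : ℝ) * (Real.Gamma (((k + 1 : ℕ) : ℝ) / 2)) ^ 2 * (Qf k) ^ 2 /
            (2 * (2 * ((k + 1 : ℕ) : ℝ) + 1)) *
          ∏ j ∈ Finset.Icc 1 (k + 1),
            ((2 * (j : ℝ)) ^ 2 / ((2 * (j : ℝ)) ^ 2 - 1)) ^ (((k + 1 : ℕ) : ℝ) - 1 / 2) =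
          Pf k * Pf (k + 1) := by
        rw [lemA k]
        have hWf : (∏ j ∈ Finset.Icc 1 (k + 1),
            ((2 * (j : ℝ)) ^ 2 / ((2 * (j : ℝ)) ^ 2 - 1)) ^ (((k + 1 : ℕ) : ℝ) - 1 / 2)) =
            Wf (k + 1) := rfl
        rw [hWf]
        unfold Qf
        have hpi : (π ^ ((((k:ℝ) + 1) ^ 2) / 2)) ^ 2 = π ^ ((k + 1) ^ 2) := by
          rw [← Real.rpow_natCast (π ^ ((((k:ℝ) + 1) ^ 2) / 2)) 2, ← Real.rpow_mul Real.pi_pos.le,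
            show (((k:ℝ) + 1) ^ 2) / 2 * ((2:ℕ):ℝ) = (((k + 1) ^ 2 : ℕ) : ℝ) by push_cast; ring,
            Real.rpow_natCast]
        have hG : Real.Gamma (((k:ℝ) + 1) / 2) ≠ 0 := (Real.Gamma_pos_of_pos (by positivity)).ne'
        have hGc : Real.Gamma (((k + 1 : ℕ) : ℝ) / 2) = Real.Gamma (((k:ℝ) + 1) / 2) := by push_cast; rfl
        rw [hGc, mul_pow, div_pow, mul_pow, hpi]
        push_cast
        field_simp
        ring
      rw [hRHS] at hrec
      have hM2 : M (k + 1) = Pf (k + 1) := mul_left_cancel₀ hPk hrec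
      -- N (k+1) = Qf (k+1)
      have hrec2 := hNrec (k + 1) (by omega)
      simp only [Nat.add_sub_cancel] at hrec2
      rw [hNk, hM2] at hrec2
      have hVf : (∏ j ∈ Finset.Icc 2 (k + 1 + 1),
          ((2 * (j : ℝ) - 1) ^ 2 / ((2 * (j : ℝ) - 1) ^ 2 - 1)) ^ (k + 1)) = Vf (k + 1) := rfl
      rw [hVf] at hrec2
      have hRHS2 : (2 * ((k + 1 : ℕ) : ℝ) + 1) / (((k + 1 : ℕ) : ℝ) + 1) * (Pf (k + 1)) ^ 2 /
          (k.factorial : ℝ) * Vf (k + 1) = Qf k * Qf (k + 1) := by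
        rw [QQ k, lemB k]
        have hfa : ((k.factorial : ℝ)) ≠ 0 := by positivity
        have h2 : ((k:ℝ) + 2) ≠ 0 := by positivity
        push_cast
        field_simp
        ring
      rw [hRHS2] at hrec2
      have hN2 : N (k + 1) = Qf (k + 1) := mul_left_cancel₀ hQk hrec2
      exact ⟨hM2, hN2⟩
  intro k hk
  obtain ⟨h1, h2⟩ := main k hk
  exact ⟨h1, h2⟩
end

section
/- Let k ≥ 2 and let Ω: (0,1] → ℝ be a differentiable function satisfying the logarithmic evolution equation Ω'(u) = ((2k−1)/2) · Ω(u) · d/du [ log( 1 / ( u^k · Π_{j=1}^{k} ((2j)² − u) ) ) ] for u ∈ (0,1), together with the limit lim_{u→0⁺} u^{k(2k−1)/2} Ω(u) = A for some real A ≠ 0. Then for all u ∈ (0,1], Ω(u) = (A / u^{k(2k−1)/2}) · Π_{j=1}^{k} ( (2j)² / ((2j)² − u) )^{k − 1/2}. In particular Ω(u) ≠ 0 for all u ∈ (0,1]. -/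
open Real Set Filter

theorem wronskian_ode_solution (k : ℕ) (hk : 2 ≤ k) (Ω : ℝ → ℝ) (A : ℝ) (hA : A ≠ 0)
    (hdiff : ∀ u ∈ Set.Ioc (0:ℝ) 1, DifferentiableAt ℝ Ω u)
    (hode : ∀ u ∈ Set.Ioo (0:ℝ) 1,
      deriv Ω u = (2 * (k : ℝ) - 1) / 2 * Ω u *
        deriv (fun v : ℝ =>
          Real.log (1 / (v ^ k * ∏ j ∈ Finset.Icc 1 k, ((2 * (j : ℝ)) ^ 2 - v)))) u)
    (hlim : Filter.Tendsto (fun u : ℝ => u ^ (((k : ℝ) * (2 * (k : ℝ) - 1)) / 2) * Ω u)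
      (nhdsWithin 0 (Set.Ioi 0)) (nhds A)) :
    ∀ u ∈ Set.Ioc (0:ℝ) 1,
      Ω u = A / u ^ (((k : ℝ) * (2 * (k : ℝ) - 1)) / 2) *
          ∏ j ∈ Finset.Icc 1 k,
            ((2 * (j : ℝ)) ^ 2 / ((2 * (j : ℝ)) ^ 2 - u)) ^ ((k : ℝ) - 1 / 2) ∧
        Ω u ≠ 0 := by
  set β : ℝ := (2 * (k : ℝ) - 1) / 2 with hβ
  set Q : ℝ → ℝ := fun v => ∏ j ∈ Finset.Icc 1 k, ((2 * (j : ℝ)) ^ 2 - v) with hQdef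
  set P : ℝ → ℝ := fun v => v ^ k * Q v with hPdef
  set g : ℝ → ℝ := fun v => Ω v * P v ^ β with hgdef
  have hfac : ∀ u : ℝ, u ≤ 1 → ∀ j ∈ Finset.Icc 1 k, 0 < (2 * (j : ℝ)) ^ 2 - u := by
    intro u hu j hj
    have hj1 : (1 : ℕ) ≤ j := (Finset.mem_Icc.mp hj).1
    have hj1' : (1 : ℝ) ≤ (j : ℝ) := by exact_mod_cast hj1
    nlinarith
  have hQpos : ∀ v : ℝ, v ≤ 1 → 0 < Q v := by
    intro v hv
    exact Finset.prod_pos (hfac v hv)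
  have hQdiff : ∀ v : ℝ, DifferentiableAt ℝ Q v := by
    intro v
    exact DifferentiableAt.fun_finsetProd fun j _ =>
      (differentiableAt_const _).sub differentiableAt_fun_id
  have hPdiff : ∀ v : ℝ, DifferentiableAt ℝ P v :=
    fun v => (differentiableAt_pow k).mul (hQdiff v)
  have hPpos : ∀ u ∈ Set.Ioc (0:ℝ) 1, 0 < P u := by
    intro u hu
    exact mul_pos (pow_pos hu.1 k) (hQpos u hu.2)
  have hPQ : ∀ v : ℝ, P v = v ^ k * ∏ j ∈ Finset.Icc 1 k, ((2 * (j : ℝ)) ^ 2 - v) :=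
    fun v => rfl
  -- derivative of the log term
  have hlogderiv : ∀ u ∈ Set.Ioo (0:ℝ) 1,
      deriv (fun v : ℝ =>
        Real.log (1 / (v ^ k * ∏ j ∈ Finset.Icc 1 k, ((2 * (j : ℝ)) ^ 2 - v)))) u
      = -(deriv P u / P u) := by
    intro u hu
    have hPu : 0 < P u := hPpos u ⟨hu.1, hu.2.le⟩
    have hev : ∀ᶠ v in nhds u, 0 < P v :=
      (hPdiff u).continuousAt.eventually (eventually_gt_nhds hPu)
    have heq : (fun v : ℝ =>
        Real.log (1 / (v ^ k * ∏ j ∈ Finset.Icc 1 k, ((2 * (j : ℝ)) ^ 2 - v))))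
        =ᶠ[nhds u] fun v => -Real.log (P v) := by
      filter_upwards [hev] with v hv
      rw [← hPQ v, one_div, Real.log_inv]
    rw [heq.deriv_eq]
    exact (((hPdiff u).hasDerivAt.log hPu.ne').neg).deriv
  -- g has zero derivative on the interior
  have hg0 : ∀ u ∈ Set.Ioo (0:ℝ) 1, HasDerivAt g 0 u := by
    intro u hu
    have hPu : 0 < P u := hPpos u ⟨hu.1, hu.2.le⟩
    have hΩ : HasDerivAt Ω (deriv Ω u) u := (hdiff u ⟨hu.1, hu.2.le⟩).hasDerivAt
    have hP : HasDerivAt P (deriv P u) u := (hPdiff u).hasDerivAt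
    have hrpow : HasDerivAt (fun v => P v ^ β) (deriv P u * β * P u ^ (β - 1)) u :=
      hP.rpow_const (Or.inl hPu.ne')
    have hmul := hΩ.mul hrpow
    have hΩ' : deriv Ω u = β * Ω u * (-(deriv P u / P u)) := by
      rw [hode u hu, hlogderiv u hu, hβ]
    rw [hΩ'] at hmul
    have hP1 : P u ^ β = P u ^ (β - 1) * P u := by
      rw [← Real.rpow_add_one hPu.ne']; ring_nf
    have hzero : β * Ω u * -(deriv P u / P u) * P u ^ β + Ω u * (deriv P u * β * P u ^ (β - 1)) = 0 := by
      rw [hP1]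
      field_simp
      ring
    rw [hzero] at hmul
    exact hmul
  have hgdiffAt : ∀ x ∈ Set.Ioc (0:ℝ) 1, DifferentiableAt ℝ g x := by
    intro x hx
    exact (hdiff x hx).mul ((hPdiff x).rpow_const (Or.inl (hPpos x hx).ne'))
  have hconst : ∀ u ∈ Set.Ioc (0:ℝ) 1, g u = g 1 := by
    intro u hu
    have key := constant_of_has_deriv_right_zero (f := g) (a := u) (b := 1)
      (fun x hx => (hgdiffAt x ⟨lt_of_lt_of_le hu.1 hx.1, hx.2⟩).continuousAt.continuousWithinAt)
      (fun x hx => (hg0 x ⟨lt_of_lt_of_le hu.1 hx.1, hx.2⟩).hasDerivWithinAt)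
    exact (key 1 (right_mem_Icc.mpr hu.2)).symm
  -- express g on Ioc
  have hgx : ∀ x ∈ Set.Ioc (0:ℝ) 1,
      g x = (x ^ (((k : ℝ) * (2 * (k : ℝ) - 1)) / 2) * Ω x) * Q x ^ β := by
    intro x hx
    have hx0 : (0:ℝ) < x := hx.1
    have hQx : 0 < Q x := hQpos x hx.2
    have h1 : (x ^ k * Q x) ^ β = (x ^ k : ℝ) ^ β * Q x ^ β :=
      Real.mul_rpow (pow_nonneg hx0.le k) hQx.le
    have h2 : ((x : ℝ) ^ k) ^ β = x ^ (((k : ℝ) * (2 * (k : ℝ) - 1)) / 2) := by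
      rw [← Real.rpow_natCast x k, ← Real.rpow_mul hx0.le]
      congr 1
      rw [hβ]; ring
    show Ω x * (x ^ k * Q x) ^ β = _
    rw [h1, h2]; ring
  -- identify the constant
  have hc : g 1 = A * Q 0 ^ β := by
    have hmem : Set.Ioc (0:ℝ) 1 ∈ nhdsWithin (0:ℝ) (Set.Ioi 0) :=
      mem_of_superset (Ioo_mem_nhdsGT_of_mem (⟨le_refl 0, one_pos⟩ : (0:ℝ) ∈ Set.Ico 0 1))
        Ioo_subset_Ioc_self
    have h1 : Tendsto g (nhdsWithin 0 (Set.Ioi 0)) (nhds (g 1)) := by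
      refine Filter.Tendsto.congr' ?_ tendsto_const_nhds
      filter_upwards [hmem] with x hx
      exact (hconst x hx).symm
    have hq : Tendsto (fun u : ℝ => Q u ^ β) (nhdsWithin 0 (Set.Ioi 0)) (nhds (Q 0 ^ β)) :=
      (((hQdiff 0).continuousAt.rpow_const
        (Or.inl (hQpos 0 zero_le_one).ne')).tendsto).mono_left nhdsWithin_le_nhds
    have h2 : Tendsto g (nhdsWithin 0 (Set.Ioi 0)) (nhds (A * Q 0 ^ β)) := by
      refine (hlim.mul hq).congr' ?_
      filter_upwards [hmem] with x hx
      exact (hgx x hx).symm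
    exact tendsto_nhds_unique h1 h2
  -- conclude
  intro u hu
  have hu0 : (0:ℝ) < u := hu.1
  have hPu : 0 < P u := hPpos u hu
  have hQu : 0 < Q u := hQpos u hu.2
  have hQ0 : 0 < Q 0 := hQpos 0 zero_le_one
  have hPb : 0 < P u ^ β := Real.rpow_pos_of_pos hPu β
  have hgu : Ω u * P u ^ β = A * Q 0 ^ β := (hconst u hu).trans hc
  have hΩu : Ω u = A * Q 0 ^ β / P u ^ β := by
    rw [eq_div_iff hPb.ne']; exact hgu
  have hexp : (k : ℝ) - 1 / 2 = β := by rw [hβ]; ring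
  have hprod : ∏ j ∈ Finset.Icc 1 k,
      ((2 * (j : ℝ)) ^ 2 / ((2 * (j : ℝ)) ^ 2 - u)) ^ ((k : ℝ) - 1 / 2)
      = Q 0 ^ β / Q u ^ β := by
    rw [hexp, Real.finset_prod_rpow _ _
      (fun j hj => div_nonneg (by positivity) (hfac u hu.2 j hj).le) β,
      Finset.prod_div_distrib,
      Real.div_rpow (Finset.prod_nonneg fun j _ => by positivity)
        (Finset.prod_nonneg fun j hj => (hfac u hu.2 j hj).le)]
    congr 2
    rw [hQdef]
    simp
  have hPsplit : P u ^ β = u ^ (((k : ℝ) * (2 * (k : ℝ) - 1)) / 2) * Q u ^ β := by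
    show (u ^ k * Q u) ^ β = _
    rw [Real.mul_rpow (pow_nonneg hu0.le k) hQu.le]
    congr 1
    rw [← Real.rpow_natCast u k, ← Real.rpow_mul hu0.le]
    congr 1
    rw [hβ]; ring
  have hupos : 0 < u ^ (((k : ℝ) * (2 * (k : ℝ) - 1)) / 2) := Real.rpow_pos_of_pos hu0 _
  refine ⟨?_, ?_⟩
  · rw [hΩu, hprod, hPsplit]
    field_simp
  · rw [hΩu]
    exact div_ne_zero (mul_ne_zero hA (Real.rpow_pos_of_pos hQ0 β).ne') hPb.ne'
end
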